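/- Root function criterion (core of Theorem 3.6). Let λ ∈ ℂ and k ∈ ℕ (including k = 0), and define φ_k : [0,2π] → ℂ by φ_k(x) = x^k e^{−i λ̄ x}, where λ̄ denotes the complex conjugate of λ. Then φ_k satisfies the non-local boundary condition φ_k(2π) = φ_k(0) + ∫₀^{2π} conj(i K(t)) · φ_k(t) dt if and only if Φ^{(k)}(λ) = 0, where Φ^{(k)} denotes the k-th complex derivative of Φ (with Φ^{(0)} = Φ). -/

import Mathlib

/-!
Differentiating under the integral sign (the integrand is dominated by a multiple of `|K|` on
compact sets of `λ`) gives
`Φ⁽ᵏ⁾(λ) = 0ᵏ − (2πi)ᵏ e^{2πiλ} + i ∫₀^{2π} (it)ᵏ e^{iλt} K(t) dt`,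
where `0ᵏ` is the Kronecker delta `δ_{k0}`. The complex conjugate of the boundary condition for
`φ_k` reads `(2π)ᵏ e^{2πiλ} = 0ᵏ + i ∫₀^{2π} tᵏ e^{iλt} K(t) dt`, and multiplying it by `iᵏ`
turns it into `Φ⁽ᵏ⁾(λ) = 0`, since `iᵏ 0ᵏ = 0ᵏ`.
-/
open MeasureTheory Real Complex

/-- `Φ(λ) = 1 − e^{2πiλ} + i ∫₀^{2π} e^{iλt} K(t) dt`. -/
noncomputable def Phi (K : ℝ → ℂ) (lam : ℂ) : ℂ :=
  1 - Complex.exp (2 * Real.pi * Complex.I * lam)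
    + Complex.I * ∫ t in (0:ℝ)..(2 * Real.pi), Complex.exp (Complex.I * lam * t) * K t

open ComplexConjugate

theorem intervalIntegrable_of_memLp_Ioo {E : Type*} [NormedAddCommGroup E] {f : ℝ → E}
    {a b : ℝ} {p : ENNReal} (hp : 1 ≤ p) (hab : a ≤ b)
    (hf : MemLp f p (volume.restrict (Set.Ioo a b))) : IntervalIntegrable f volume a b :=
  (intervalIntegrable_iff_integrableOn_Ioo_of_le hab).2 (hf.integrable hp)

theorem intervalIntegral_conj (f : ℝ → ℂ) (a b : ℝ) :
    ∫ t in a..b, conj (f t) = conj (∫ t in a..b, f t) := by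
  simp only [intervalIntegral, integral_conj, map_sub]

theorem iteratedDeriv_eq_of_hasDerivAt_succ {𝕜 E : Type*} [NontriviallyNormedField 𝕜]
    [NormedAddCommGroup E] [NormedSpace 𝕜 E] {F : ℕ → 𝕜 → E}
    (hF : ∀ n x, HasDerivAt (F n) (F (n + 1) x) x) (k : ℕ) : iteratedDeriv k (F 0) = F k := by
  induction k with
  | zero => exact iteratedDeriv_zero
  | succ k ih => exact funext fun x => by rw [iteratedDeriv_succ, ih, (hF k x).deriv]

noncomputable def fourierLaplace (g : ℝ → ℂ) (a b : ℝ) (z : ℂ) : ℂ :=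
  ∫ t in a..b, exp (I * z * t) * g t

theorem hasDerivAt_fourierLaplace {g : ℝ → ℂ} {a b : ℝ} (hg : IntervalIntegrable g volume a b)
    (z : ℂ) :
    HasDerivAt (fourierLaplace g a b) (fourierLaplace (fun t => I * t * g t) a b z) z := by
  obtain ⟨C, hC⟩ := ((isCompact_closedBall z 1).prod (isCompact_uIcc (a := a) (b := b)))
    |>.exists_bound_of_continuousOn (f := fun p : ℂ × ℝ => exp (I * p.1 * p.2) * (I * p.2))
      (by fun_prop)
  have hg' : IntervalIntegrable (fun t => exp (I * z * t) * (I * t * g t)) volume a b :=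
    (hg.continuousOn_mul (by fun_prop)).continuousOn_mul (by fun_prop)
  refine (intervalIntegral.hasDerivAt_integral_of_dominated_loc_of_deriv_le
    (F' := fun x t => exp (I * x * t) * (I * t * g t)) (bound := fun t => C * ‖g t‖)
    (Metric.closedBall_mem_nhds z one_pos)
    (.of_forall fun x => (hg.continuousOn_mul (by fun_prop)).aestronglyMeasurable_restrict_uIoc)
    (hg.continuousOn_mul (by fun_prop)) hg'.aestronglyMeasurable_restrict_uIoc
    (.of_forall fun t ht x hx => ?_) (hg.norm.const_mul C) (.of_forall fun t _ x _ => ?_)).2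
  · calc ‖exp (I * x * t) * (I * t * g t)‖ = ‖exp (I * x * t) * (I * t)‖ * ‖g t‖ := by
          rw [← norm_mul, mul_assoc (exp (I * x * t))]
      _ ≤ C * ‖g t‖ := by
          gcongr
          exact hC (x, t) ⟨hx, Set.uIoc_subset_uIcc ht⟩
  · exact ((((hasDerivAt_id' x).const_mul I).mul_const (t : ℂ)).cexp.mul_const (g t)).congr_deriv
      (by ring)

theorem iteratedDeriv_Phi {K : ℝ → ℂ} (hK : IntervalIntegrable K volume 0 (2 * π)) (k : ℕ)
    (z : ℂ) :
    iteratedDeriv k (Phi K) z = 0 ^ k - (2 * π * I) ^ k * exp (2 * π * I * z)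
      + I * ∫ t in (0:ℝ)..2 * π, exp (I * z * t) * ((I * t) ^ k * K t) := by
  set F : ℕ → ℂ → ℂ := fun n z => 0 ^ n - (2 * π * I) ^ n * exp (2 * π * I * z)
      + I * fourierLaplace (fun t => (I * t) ^ n * K t) 0 (2 * π) z
  have hF0 : F 0 = Phi K := by
    funext z
    simp [F, Phi, fourierLaplace]
  have hF : ∀ n x, HasDerivAt (F n) (F (n + 1) x) x := by
    intro n x
    have hexp := ((hasDerivAt_id' x).const_mul (2 * π * I)).cexp
    have hmoment := hasDerivAt_fourierLaplace (hK.continuousOn_mul (g := fun t => (I * t) ^ n)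
      (by fun_prop)) x
    refine (((hexp.const_mul ((2 * π * I) ^ n)).const_sub (0 ^ n)).add
      (hmoment.const_mul I)).congr_deriv ?_
    have hintegrand : ∀ t : ℝ, exp (I * x * t) * (I * t * ((I * t) ^ n * K t))
        = exp (I * x * t) * ((I * t) ^ (n + 1) * K t) := fun t => by ring
    simp only [F, fourierLaplace, hintegrand, zero_pow n.succ_ne_zero]
    ring
  rw [← hF0, iteratedDeriv_eq_of_hasDerivAt_succ hF]
  rfl

/-- Root function criterion (core of Theorem 3.6): the function
`φ_k(x) = x^k e^{−i λ̄ x}` satisfies the non-local boundary condition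
`φ_k(2π) = φ_k(0) + ∫₀^{2π} conj(iK(t)) φ_k(t) dt` if and only if `Φ^{(k)}(λ) = 0`. -/
theorem root_function_boundary_condition_iff
    (K : ℝ → ℂ)
    (hK : MeasureTheory.MemLp K 2 (MeasureTheory.volume.restrict (Set.Ioo 0 (2 * Real.pi))))
    (lam : ℂ) (k : ℕ) :
    (((2 * Real.pi : ℝ) : ℂ) ^ k *
        Complex.exp (-(Complex.I * (starRingEnd ℂ) lam * (2 * Real.pi : ℝ)))
      = ((0 : ℝ) : ℂ) ^ k * Complex.exp (-(Complex.I * (starRingEnd ℂ) lam * (0 : ℝ)))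
        + ∫ t in (0:ℝ)..(2 * Real.pi),
            (starRingEnd ℂ) (Complex.I * K t) *
              ((t : ℂ) ^ k * Complex.exp (-(Complex.I * (starRingEnd ℂ) lam * t))))
      ↔ iteratedDeriv k (Phi K) lam = 0 := by
  set J := ∫ t in (0:ℝ)..2 * π, I * K t * (t ^ k * exp (I * lam * t)) with hJ
  have hPhi : iteratedDeriv k (Phi K) lam
      = -I ^ k * ((2 * π) ^ k * exp (2 * π * I * lam) - (0 ^ k + J)) := by
    have hmoment :
        I * ∫ t in (0:ℝ)..2 * π, exp (I * lam * t) * ((I * t) ^ k * K t) = I ^ k * J := by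
      rw [hJ, ← intervalIntegral.integral_const_mul, ← intervalIntegral.integral_const_mul]
      congr 1 with t
      ring
    have hzero : I ^ k * 0 ^ k = (0 : ℂ) ^ k := by rw [← mul_pow, mul_zero]
    rw [iteratedDeriv_Phi (intervalIntegrable_of_memLp_Ioo one_le_two two_pi_pos.le hK), hmoment]
    linear_combination -hzero
  rw [hPhi, neg_mul, neg_eq_zero, mul_eq_zero, or_iff_right (pow_ne_zero k I_ne_zero),
    ← sub_eq_zero, ← map_eq_zero_iff _ (starRingEnd ℂ).injective]
  simp only [map_sub, map_add, map_mul, map_pow, ← intervalIntegral_conj, ← exp_conj, map_neg,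
    conj_conj, conj_ofReal, conj_I, neg_mul, neg_neg, ofReal_zero, mul_zero, map_zero,
    neg_zero, Complex.exp_zero, mul_one, ← hJ]
  refine Iff.of_eq (congrArg (· = 0) ?_)
  push_cast
  ring_nf
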